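/- Let B be a mixed Nash equilibrium of the single-item first-price auction in which two players i and j have strictly positive expected utilities, E[u_i] > 0 and E[u_j] > 0. Let G_k be the CDF of B_k and q_k = inf{x : G_k(x) > 0}. Then q_i = q_j =: q, and moreover G_i(q) = G_j(q) = 0, and consequently F_i(q) = F_j(q) = 0, where F_k(x) = P_{b_{−k}∼B_{−k}}[max_{l≠k} b_l ≤ x]. -/

import Mathlib

/-!
In equilibrium almost every bid of a player is a best response, and bidding `a` earns
`(v - a) * W(a)`, where `W(a)` is the probability of winning with bid `a`.

If `q_i < q_j`, player `i` bids below `q_j` with positive probability; such a bid almost surely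
loses to `j`, so it earns `0`, contradicting `E[u_i] > 0`. Hence `q_i = q_j =: q`.

Suppose `i` had an atom at `q`. Then `q` is a best response for `i`. Bidding `q + ε` wins whenever
all others bid at most `q`, so letting `ε → 0` shows that `W_i(q)` equals the probability `P` that
all other bids are at most `q`, and `P > 0` since `E[u_i] > 0`. So `j` also has an atom at `q`,
with `W_j(q) > 0`. Now the events "`i` bids `q` and wins" and "`j` bids `q` and wins" are disjoint
subevents of "`i` bids `q` and nobody bids more", which has probability `B_i{q} * P`; this gives
`B_i{q} * W_i(q) + B_j{q} * W_j(q) ≤ B_i{q} * P = B_i{q} * W_i(q)`, which is absurd.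
-/

open MeasureTheory

namespace MeasureTheory

variable {ι α : Type*} [Fintype ι] [MeasurableSpace α]
  (μ : ι → Measure α) [∀ i, IsProbabilityMeasure (μ i)]

theorem measure_pi_forall_ne_mem_eq_zero {s : Set α} {k l : ι} (hlk : l ≠ k) (h : μ l s = 0) :
    Measure.pi μ {b | ∀ m, m ≠ k → b m ∈ s} = 0 :=
  measure_mono_null (fun _ hb => hb l hlk) (Measure.pi_eval_preimage_null μ h)

theorem measurableSet_forall_ne_mem {s : Set α} (hs : MeasurableSet s) (k : ι) :
    MeasurableSet {b : ι → α | ∀ m, m ≠ k → b m ∈ s} :=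
  MeasurableSet.pi (Set.to_countable _) fun _ _ => hs

variable [DecidableEq ι]

theorem measurePreserving_update_prod (k : ι) :
    MeasurePreserving (fun p : (ι → α) × α => Function.update p.1 k p.2)
      ((Measure.pi μ).prod (μ k)) (Measure.pi μ) := by
  refine ⟨measurable_update', (Measure.pi_eq fun s hs => ?_).symm⟩
  have hpre : (fun p : (ι → α) × α => Function.update p.1 k p.2) ⁻¹' Set.univ.pi s
      = Set.univ.pi (Function.update s k Set.univ) ×ˢ s k := by
    ext ⟨b, x⟩
    simp only [Set.mem_preimage, Set.mem_univ_pi, Set.mem_prod]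
    refine ⟨fun h => ⟨fun m => ?_, by simpa using h k⟩, fun ⟨hb, hx⟩ m => ?_⟩
    · rcases eq_or_ne m k with rfl | hm
      · simp
      · simpa [hm] using h m
    · rcases eq_or_ne m k with rfl | hm
      · simpa using hx
      · simpa [hm] using hb m
  rw [Measure.map_apply measurable_update' (.univ_pi hs), hpre, Measure.prod_prod,
    Measure.pi_pi]
  simp_rw [Function.apply_update (fun i => μ i), measure_univ]
  rw [Finset.prod_update_of_mem (Finset.mem_univ k), one_mul, mul_comm]
  exact (Finset.prod_eq_mul_prod_sdiff_singleton_of_mem (Finset.mem_univ k) fun i => μ i (s i)).symm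

variable {E : Type*} [NormedAddCommGroup E] [NormedSpace ℝ E]

omit [NormedSpace ℝ E] in
theorem integrable_update_prod {f : (ι → α) → E} (hf : Integrable f (Measure.pi μ)) (k : ι) :
    Integrable (fun p : (ι → α) × α => f (Function.update p.1 k p.2))
      ((Measure.pi μ).prod (μ k)) :=
  (measurePreserving_update_prod μ k).integrable_comp_of_integrable hf

theorem integral_eq_integral_update {f : (ι → α) → E} (hf : Integrable f (Measure.pi μ))
    (k : ι) : ∫ b, f b ∂Measure.pi μ = ∫ x, ∫ b, f (Function.update b k x) ∂Measure.pi μ ∂μ k := by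
  have hφ := measurePreserving_update_prod μ k
  calc ∫ b, f b ∂Measure.pi μ = ∫ b, f b ∂((Measure.pi μ).prod (μ k)).map _ := by rw [hφ.map_eq]
    _ = ∫ p, f (Function.update p.1 k p.2) ∂(Measure.pi μ).prod (μ k) :=
      integral_map hφ.measurable.aemeasurable (by rw [hφ.map_eq]; exact hf.aestronglyMeasurable)
    _ = _ := integral_prod_symm _ (integrable_update_prod μ hf k)

theorem ae_integral_update_eq_of_ae_le {f : (ι → α) → ℝ} (hf : Integrable f (Measure.pi μ))
    (k : ι)
    (hle : ∀ᵐ x ∂μ k, ∫ b, f (Function.update b k x) ∂Measure.pi μ ≤ ∫ b, f b ∂Measure.pi μ) :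
    ∀ᵐ x ∂μ k, ∫ b, f (Function.update b k x) ∂Measure.pi μ = ∫ b, f b ∂Measure.pi μ :=
  (integral_eq_iff_of_ae_le (integrable_update_prod μ hf k).integral_prod_right
    (integrable_const _) hle).1 (by simp [← integral_eq_integral_update μ hf k])

theorem integral_indicator_eval_eq [CompleteSpace E] [MeasurableSingletonClass α] {g : (ι → α) → E}
    (hg : Integrable g (Measure.pi μ)) (k : ι) (x₀ : α) :
    ∫ b, {b | b k = x₀}.indicator g b ∂Measure.pi μ
      = (μ k).real {x₀} • ∫ b, g (Function.update b k x₀) ∂Measure.pi μ := by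
  have hS : MeasurableSet {b : ι → α | b k = x₀} :=
    (measurableSet_singleton x₀).preimage (measurable_pi_apply k)
  have hslice : ∀ x, ∫ b, {b | b k = x₀}.indicator g (Function.update b k x) ∂Measure.pi μ
      = ({x₀} : Set α).indicator (fun _ => ∫ b, g (Function.update b k x₀) ∂Measure.pi μ) x := by
    intro x
    rcases eq_or_ne x x₀ with rfl | hx
    · simp
    · simp [hx]
  rw [integral_eq_integral_update μ (hg.indicator hS) k]
  simp_rw [hslice]
  exact integral_indicator_const _ (measurableSet_singleton x₀)

end MeasureTheory

noncomputable def lowestBid (ν : Measure ℝ) : ℝ := sInf {x | 0 < (ν (Set.Iic x)).toReal}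

section LowestBid

variable {ν : Measure ℝ}

theorem nonneg_of_measure_Iic_pos (h0 : ν (Set.Iio 0) = 0) {x : ℝ}
    (hx : 0 < (ν (Set.Iic x)).toReal) : 0 ≤ x := by
  by_contra! hneg
  have : ν (Set.Iic x) = 0 := measure_mono_null (Set.Iic_subset_Iio.2 hneg) h0
  simp [this] at hx

variable [IsProbabilityMeasure ν]

theorem lowestBid_set_nonempty : {x | 0 < (ν (Set.Iic x)).toReal}.Nonempty := by
  have hlim := tendsto_measure_Iic_atTop ν
  rw [measure_univ] at hlim
  obtain ⟨x, hx⟩ := (hlim.eventually (lt_mem_nhds zero_lt_one)).exists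
  exact ⟨x, ENNReal.toReal_pos hx.ne' (measure_ne_top _ _)⟩

theorem measure_Iio_ne_zero_of_lowestBid_lt {y : ℝ} (hy : lowestBid ν < y) :
    ν (Set.Iio y) ≠ 0 := by
  obtain ⟨x, hx, hxy⟩ := exists_lt_of_csInf_lt lowestBid_set_nonempty hy
  exact fun h =>
    (ENNReal.toReal_pos_iff.1 hx).1.ne' (measure_mono_null (Set.Iic_subset_Iio.2 hxy) h)

variable (h0 : ν (Set.Iio 0) = 0)
include h0

theorem lowestBid_nonneg : 0 ≤ lowestBid ν :=
  le_csInf lowestBid_set_nonempty fun _ => nonneg_of_measure_Iic_pos h0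

theorem measure_Iic_eq_zero_of_lt_lowestBid {x : ℝ} (hx : x < lowestBid ν) :
    ν (Set.Iic x) = 0 := by
  by_contra hne
  exact hx.not_ge (csInf_le ⟨0, fun _ => nonneg_of_measure_Iic_pos h0⟩
    (ENNReal.toReal_pos hne (measure_ne_top _ _)))

theorem measure_Iio_lowestBid : ν (Set.Iio (lowestBid ν)) = 0 := by
  have hlt : ∀ m : ℕ, lowestBid ν - 1 / (m + 1) < lowestBid ν := fun m => by
    linarith [Nat.one_div_pos_of_nat (α := ℝ) (n := m)]
  rw [← iUnion_Iic_eq_Iio_of_lt_of_tendsto hlt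
    (by simpa using tendsto_const_nhds.sub (tendsto_one_div_add_atTop_nhds_zero_nat (𝕜 := ℝ)))]
  exact measure_iUnion_null fun m => measure_Iic_eq_zero_of_lt_lowestBid h0 (hlt m)

theorem measure_singleton_lowestBid_ne_zero (h : ν (Set.Iic (lowestBid ν)) ≠ 0) :
    ν {lowestBid ν} ≠ 0 := by
  intro hq
  rw [← Set.Iio_insert, Set.insert_eq] at h
  exact h (measure_union_null hq (measure_Iio_lowestBid h0))

end LowestBid

section FirstPriceAuction

variable {ι : Type*} [Fintype ι]

structure IsTieBreakingRule (τ : (ι → ℝ) → ι → ℝ) : Prop where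
  measurable : ∀ i, Measurable fun b => τ b i
  nonneg : ∀ b i, 0 ≤ τ b i
  sum_eq_one : ∀ b, ∑ i, τ b i = 1
  eq_zero_of_lt : ∀ b i, (∃ k, b i < b k) → τ b i = 0

namespace IsTieBreakingRule

variable {τ : (ι → ℝ) → ι → ℝ} (hτ : IsTieBreakingRule τ)
include hτ

theorem le_one (b : ι → ℝ) (i : ι) : τ b i ≤ 1 :=
  hτ.sum_eq_one b ▸ Finset.single_le_sum (fun m _ => hτ.nonneg b m) (Finset.mem_univ i)

theorem add_le_one (b : ι → ℝ) {i j : ι} (hij : i ≠ j) : τ b i + τ b j ≤ 1 :=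
  hτ.sum_eq_one b ▸
    Finset.add_le_sum (fun m _ => hτ.nonneg b m) (Finset.mem_univ i) (Finset.mem_univ j) hij

theorem eq_one_of_forall_ne_lt {b : ι → ℝ} {k : ι} (h : ∀ m, m ≠ k → b m < b k) :
    τ b k = 1 := by
  rw [← hτ.sum_eq_one b, Finset.sum_eq_single k
    (fun m _ hm => hτ.eq_zero_of_lt b m ⟨k, h m hm⟩) (by simp)]

theorem integrable_comp {X : Type*} [MeasurableSpace X] {ν : Measure X} [IsFiniteMeasure ν]
    {f : X → ι → ℝ} (hf : Measurable f) (i : ι) : Integrable (fun x => τ (f x) i) ν :=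
  .of_bound ((hτ.measurable i).comp hf).aestronglyMeasurable 1
    (.of_forall fun x => by simpa [abs_of_nonneg (hτ.nonneg _ _)] using hτ.le_one (f x) i)

/-- Of two players bidding `q`, at most one wins, and only if nobody bids more. -/
theorem indicator_add_indicator_le {b : ι → ℝ} {i j : ι} (hij : i ≠ j) {q : ℝ} (hq : q ≤ b i) :
    {b | b i = q}.indicator (fun b => τ b i) b + {b | b j = q}.indicator (fun b => τ b j) b
      ≤ {b | b i = q}.indicator ({b | ∀ m, m ≠ i → b m ≤ q}.indicator 1) b := by
  by_cases hD : b i = q ∧ ∀ m, m ≠ i → b m ≤ q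
  · have hone : {b | b i = q}.indicator ({b | ∀ m, m ≠ i → b m ≤ q}.indicator 1) b = (1 : ℝ) := by
      rw [Set.indicator_of_mem (show b ∈ {b : ι → ℝ | b i = q} from hD.1),
        Set.indicator_of_mem (show b ∈ {b | ∀ m, m ≠ i → b m ≤ q} from hD.2), Pi.one_apply]
    rw [hone]
    calc _ ≤ τ b i + τ b j := add_le_add
          (Set.indicator_le_self' (fun b _ => hτ.nonneg b i) b)
          (Set.indicator_le_self' (fun b _ => hτ.nonneg b j) b)
      _ ≤ 1 := hτ.add_le_one b hij
  · obtain ⟨m, hm⟩ : ∃ m, q < b m := by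
      by_cases hbi : b i = q
      · obtain ⟨m, -, hmq⟩ : ∃ m, m ≠ i ∧ q < b m := by simpa [hbi] using hD
        exact ⟨m, hmq⟩
      · exact ⟨i, lt_of_le_of_ne hq (Ne.symm hbi)⟩
    have hlose : ∀ k, {b | b k = q}.indicator (fun b => τ b k) b = 0 := fun k =>
      Set.indicator_apply_eq_zero.2 fun hk => hτ.eq_zero_of_lt b k ⟨m, hk ▸ hm⟩
    rw [hlose, hlose, add_zero]
    exact Set.indicator_nonneg (fun b _ => Set.indicator_nonneg (fun _ _ => zero_le_one) b) b

end IsTieBreakingRule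

variable [DecidableEq ι]

noncomputable def winProb (τ : (ι → ℝ) → ι → ℝ) (μ : ι → Measure ℝ) (k : ι) (a : ℝ) : ℝ :=
  ∫ b, τ (Function.update b k a) k ∂Measure.pi μ

def utility (v : ι → ℝ) (τ : (ι → ℝ) → ι → ℝ) (i : ι) (b : ι → ℝ) : ℝ :=
  τ b i * (v i - b i)

noncomputable def expectedUtility (v : ι → ℝ) (τ : (ι → ℝ) → ι → ℝ) (μ : ι → Measure ℝ)
    (i : ι) : ℝ :=
  ∫ b, utility v τ i b ∂Measure.pi μ

theorem integral_utility_update (v : ι → ℝ) (τ : (ι → ℝ) → ι → ℝ) (μ : ι → Measure ℝ)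
    (k : ι) (a : ℝ) :
    ∫ b, utility v τ k (Function.update b k a) ∂Measure.pi μ = (v k - a) * winProb τ μ k a := by
  simp_rw [utility, Function.update_self, mul_comm (τ _ k)]
  exact integral_const_mul _ _

variable {τ : (ι → ℝ) → ι → ℝ} (hτ : IsTieBreakingRule τ) (μ : ι → Measure ℝ)
  [∀ i, IsProbabilityMeasure (μ i)]
include hτ

omit [∀ i, IsProbabilityMeasure (μ i)] in
theorem winProb_nonneg (k : ι) (a : ℝ) : 0 ≤ winProb τ μ k a :=
  integral_nonneg fun _ => hτ.nonneg _ _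

theorem winProb_le (k : ι) (a : ℝ) :
    winProb τ μ k a ≤ (Measure.pi μ).real {b | ∀ m, m ≠ k → b m ≤ a} := by
  have hA : MeasurableSet {b : ι → ℝ | ∀ m, m ≠ k → b m ≤ a} :=
    measurableSet_forall_ne_mem measurableSet_Iic k
  rw [← integral_indicator_one hA]
  refine integral_mono (hτ.integrable_comp measurable_update_left k)
    ((integrable_const 1).indicator hA) fun b => ?_
  by_cases hb : b ∈ {b : ι → ℝ | ∀ m, m ≠ k → b m ≤ a}
  · simpa [Set.indicator_of_mem hb] using hτ.le_one _ k
  · simp only [Set.mem_ofPred_eq, not_forall, not_le] at hb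
    obtain ⟨m, hm, hma⟩ := hb
    rw [hτ.eq_zero_of_lt _ k ⟨m, by simpa [hm] using hma⟩]
    exact Set.indicator_nonneg (fun _ _ => zero_le_one) _

theorem measureReal_lt_le_winProb (k : ι) (a : ℝ) :
    (Measure.pi μ).real {b | ∀ m, m ≠ k → b m < a} ≤ winProb τ μ k a := by
  have hA : MeasurableSet {b : ι → ℝ | ∀ m, m ≠ k → b m < a} :=
    measurableSet_forall_ne_mem measurableSet_Iio k
  rw [← integral_indicator_one hA]
  refine integral_mono ((integrable_const 1).indicator hA)
    (hτ.integrable_comp measurable_update_left k) fun b => ?_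
  by_cases hb : b ∈ {b : ι → ℝ | ∀ m, m ≠ k → b m < a}
  · rw [Set.indicator_of_mem hb, Pi.one_apply,
      hτ.eq_one_of_forall_ne_lt fun m hm => by simpa [hm] using hb m hm]
  · rw [Set.indicator_of_notMem hb]
    exact hτ.nonneg _ _

theorem winProb_eq_zero_of_measure_Iic_eq_zero {j k : ι} (hjk : j ≠ k) {a : ℝ}
    (h : μ j (Set.Iic a) = 0) : winProb τ μ k a = 0 := by
  refine le_antisymm ((winProb_le hτ μ k a).trans ?_) (winProb_nonneg hτ μ k a)
  exact ((measureReal_eq_zero_iff (measure_ne_top _ _)).2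
    (measure_pi_forall_ne_mem_eq_zero μ hjk h)).le

omit [∀ i, IsProbabilityMeasure (μ i)] in
theorem winProb_pos_of_mul_pos {k : ι} {a c : ℝ} (h : 0 < c * winProb τ μ k a) :
    0 < winProb τ μ k a :=
  (winProb_nonneg hτ μ k a).lt_of_ne fun h' => by simp [← h'] at h

theorem mul_winProb_add_mul_winProb_le {i j : ι} (hij : i ≠ j) {q : ℝ} (hq : μ i (Set.Iio q) = 0) :
    (μ i).real {q} * winProb τ μ i q + (μ j).real {q} * winProb τ μ j q
      ≤ (μ i).real {q} * (Measure.pi μ).real {b | ∀ m, m ≠ i → b m ≤ q} := by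
  set A := {b : ι → ℝ | ∀ m, m ≠ i → b m ≤ q}
  have hA : MeasurableSet A := measurableSet_forall_ne_mem measurableSet_Iic i
  have hwin : ∀ k, ∫ b, {b | b k = q}.indicator (fun b => τ b k) b ∂Measure.pi μ
      = (μ k).real {q} * winProb τ μ k q := fun k =>
    integral_indicator_eval_eq μ (hτ.integrable_comp measurable_id k) k q
  have htie : ∫ b, {b | b i = q}.indicator (A.indicator 1) b ∂Measure.pi μ
      = (μ i).real {q} * (Measure.pi μ).real A := by
    rw [integral_indicator_eval_eq μ ((integrable_const 1).indicator hA), smul_eq_mul,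
      ← integral_indicator_one hA]
    have hupd : ∀ b, Function.update b i q ∈ A ↔ b ∈ A := fun b =>
      forall₂_congr fun m hm => by rw [Function.update_of_ne hm]
    simp only [Set.indicator_apply, hupd, Pi.one_apply]
  have hbound : ∀ᵐ b ∂Measure.pi μ,
      {b | b i = q}.indicator (fun b => τ b i) b + {b | b j = q}.indicator (fun b => τ b j) b
        ≤ {b | b i = q}.indicator (A.indicator 1) b := by
    filter_upwards [measure_eq_zero_iff_ae_notMem.1 (Measure.pi_eval_preimage_null μ hq)]
      with b hb
    exact hτ.indicator_add_indicator_le hij (not_lt.1 hb)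
  have hint : ∀ k, Integrable (fun b => {b | b k = q}.indicator (fun b => τ b k) b)
      (Measure.pi μ) := fun k =>
    (hτ.integrable_comp measurable_id k).indicator
      ((measurableSet_singleton q).preimage (measurable_pi_apply k))
  rw [← hwin, ← hwin, ← htie, ← integral_add (hint i) (hint j)]
  exact integral_mono_ae ((hint i).add (hint j))
    (((integrable_const 1).indicator hA).indicator
      ((measurableSet_singleton q).preimage (measurable_pi_apply i))) hbound

end FirstPriceAuction

section Equilibrium

variable {ι : Type*} [Fintype ι] [DecidableEq ι]

structure IsMixedNash (v : ι → ℝ) (τ : (ι → ℝ) → ι → ℝ) (μ : ι → Measure ℝ) : Prop where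
  integrable : ∀ i, Integrable (utility v τ i) (Measure.pi μ)
  integral_update_le : ∀ i a, 0 ≤ a →
    ∫ b, utility v τ i (Function.update b i a) ∂Measure.pi μ ≤ expectedUtility v τ μ i

namespace IsMixedNash

variable {v : ι → ℝ} {τ : (ι → ℝ) → ι → ℝ} {μ : ι → Measure ℝ} [∀ i, IsProbabilityMeasure (μ i)]
  (hN : IsMixedNash v τ μ) (h0 : ∀ i, μ i (Set.Iio 0) = 0)
include hN

omit [∀ i, IsProbabilityMeasure (μ i)] in
theorem deviation_le (i : ι) {a : ℝ} (ha : 0 ≤ a) :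
    (v i - a) * winProb τ μ i a ≤ expectedUtility v τ μ i :=
  integral_utility_update v τ μ i a ▸ hN.integral_update_le i a ha

include h0

theorem ae_deviation_eq (i : ι) :
    ∀ᵐ a ∂μ i, (v i - a) * winProb τ μ i a = expectedUtility v τ μ i := by
  have hbids : ∀ᵐ a ∂μ i, 0 ≤ a := by
    rw [ae_iff]
    simp only [not_le]
    exact h0 i
  simpa only [integral_utility_update, expectedUtility] using
    ae_integral_update_eq_of_ae_le μ (hN.integrable i) i
      (hbids.mono fun a ha => hN.integral_update_le i a ha)

theorem deviation_eq_of_measure_singleton_ne_zero {i : ι} {a : ℝ} (ha : μ i {a} ≠ 0) :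
    (v i - a) * winProb τ μ i a = expectedUtility v τ μ i := by
  obtain ⟨_, rfl, hx⟩ := Measure.exists_mem_of_measure_ne_zero_of_ae ha
    (ae_restrict_of_ae (hN.ae_deviation_eq h0 i))
  exact hx

variable (hτ : IsTieBreakingRule τ)
include hτ

theorem lowestBid_le {i j : ι} (hji : j ≠ i) (hpos : 0 < expectedUtility v τ μ i) :
    lowestBid (μ j) ≤ lowestBid (μ i) := by
  by_contra! hlt
  obtain ⟨a, ha, hopt⟩ := Measure.exists_mem_of_measure_ne_zero_of_ae
    (measure_Iio_ne_zero_of_lowestBid_lt hlt) (ae_restrict_of_ae (hN.ae_deviation_eq h0 i))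
  rw [winProb_eq_zero_of_measure_Iic_eq_zero hτ μ hji
    (measure_Iic_eq_zero_of_lt_lowestBid (h0 j) ha), mul_zero] at hopt
  exact hpos.ne hopt

omit h0 in
theorem measureReal_le_winProb {i : ι} {q : ℝ} (hq : 0 ≤ q)
    (hopt : (v i - q) * winProb τ μ i q = expectedUtility v τ μ i)
    (hpos : 0 < expectedUtility v τ μ i) :
    (Measure.pi μ).real {b | ∀ m, m ≠ i → b m ≤ q} ≤ winProb τ μ i q := by
  set P := (Measure.pi μ).real {b | ∀ m, m ≠ i → b m ≤ q}
  have hvq : 0 < v i - q := pos_of_mul_pos_left (hopt ▸ hpos) (winProb_nonneg hτ μ i q)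
  have hover : ∀ a ∈ Set.Ioi q, (v i - a) * P ≤ expectedUtility v τ μ i := by
    intro a ha
    rcases le_total a (v i) with hav | hva
    · calc (v i - a) * P ≤ (v i - a) * winProb τ μ i a := by
            refine mul_le_mul_of_nonneg_left ?_ (sub_nonneg.2 hav)
            refine (measureReal_mono fun b hb m hm => ?_).trans (measureReal_lt_le_winProb hτ μ i a)
            exact (hb m hm).trans_lt ha
        _ ≤ _ := hN.deviation_le i (hq.trans ha.le)
    · exact (mul_nonpos_of_nonpos_of_nonneg (sub_nonpos.2 hva) measureReal_nonneg).trans hpos.le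
  have hlim : (v i - q) * P ≤ expectedUtility v τ μ i :=
    le_of_tendsto (((continuous_const.sub continuous_id).mul continuous_const).tendsto q
      |>.mono_left nhdsWithin_le_nhds) (eventually_nhdsWithin_of_forall hover)
  rw [← hopt] at hlim
  exact le_of_mul_le_mul_left hlim hvq

theorem measure_Iic_lowestBid_eq_zero {i j : ι} (hij : i ≠ j)
    (hi : 0 < expectedUtility v τ μ i) (hj : 0 < expectedUtility v τ μ j)
    (hq : lowestBid (μ i) = lowestBid (μ j)) : μ i (Set.Iic (lowestBid (μ i))) = 0 := by
  set q := lowestBid (μ i)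
  by_contra hatom
  have hopt_i := hN.deviation_eq_of_measure_singleton_ne_zero h0
    (measure_singleton_lowestBid_ne_zero (h0 i) hatom)
  have hwin_i : winProb τ μ i q = (Measure.pi μ).real {b | ∀ m, m ≠ i → b m ≤ q} :=
    le_antisymm (winProb_le hτ μ i q)
      (hN.measureReal_le_winProb hτ (lowestBid_nonneg (h0 i)) hopt_i hi)
  have hwin_i_pos : 0 < winProb τ μ i q := winProb_pos_of_mul_pos hτ μ (hopt_i ▸ hi)
  have hatom_j : μ j {q} ≠ 0 := by
    refine hq ▸ measure_singleton_lowestBid_ne_zero (h0 j) (hq ▸ fun h => ?_)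
    exact hwin_i_pos.ne' (hwin_i.trans ((measureReal_eq_zero_iff (measure_ne_top _ _)).2
      (measure_pi_forall_ne_mem_eq_zero μ hij.symm h)))
  have hopt_j := hN.deviation_eq_of_measure_singleton_ne_zero h0 hatom_j
  have hwin_j_pos : 0 < winProb τ μ j q := winProb_pos_of_mul_pos hτ μ (hopt_j ▸ hj)
  have htie := mul_winProb_add_mul_winProb_le hτ μ hij (measure_Iio_lowestBid (h0 i))
  rw [hwin_i] at htie
  have hmass_j : 0 < (μ j).real {q} := ENNReal.toReal_pos hatom_j (measure_ne_top _ _)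
  nlinarith [mul_pos hmass_j hwin_j_pos]

end IsMixedNash

end Equilibrium

theorem stmt_5_general
    (n : ℕ)
    (v : Fin n → ℝ)
    -- the tie-breaking rule: a measurable probability vector supported on the highest bidders
    (τ : (Fin n → ℝ) → Fin n → ℝ)
    (hτ_meas : ∀ i, Measurable fun b => τ b i)
    (hτ_nonneg : ∀ b i, 0 ≤ τ b i)
    (hτ_sum : ∀ b, ∑ i, τ b i = 1)
    (hτ_max : ∀ b i, (∃ k, b i < b k) → τ b i = 0)
    -- utilities
    (u : Fin n → (Fin n → ℝ) → ℝ)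
    (hu : ∀ i b, u i b = τ b i * (v i - b i))
    -- the mixed strategy profile: independent bids, supported on `[0, ∞)`
    (B : Fin n → Measure ℝ)
    [∀ i, IsProbabilityMeasure (B i)]
    (hB_supp : ∀ i, B i (Set.Iio 0) = 0)
    -- all relevant expectations exist
    (hInt : ∀ i, Integrable (u i) (Measure.pi B))
    -- the Nash equilibrium condition
    (hNash : ∀ i (a : ℝ), 0 ≤ a →
      (∫ b, u i b ∂(Measure.pi B)) ≥ ∫ b, u i (Function.update b i a) ∂(Measure.pi B))
    -- CDF of each player's bid, infimum of its support, CDF of the highest competing bid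
    (G : Fin n → ℝ → ℝ) (hG : ∀ k x, G k x = (B k (Set.Iic x)).toReal)
    (q : Fin n → ℝ) (hq : ∀ k, q k = sInf {x : ℝ | 0 < G k x})
    (F : Fin n → ℝ → ℝ)
    (hF : ∀ i x, F i x = ((Measure.pi B) {b | ∀ k, k ≠ i → b k ≤ x}).toReal)
    -- two distinct players with strictly positive expected utility
    (i j : Fin n) (hij : i ≠ j)
    (hui : 0 < ∫ b, u i b ∂(Measure.pi B))
    (huj : 0 < ∫ b, u j b ∂(Measure.pi B)) :
    q i = q j ∧ G i (q i) = 0 ∧ G j (q i) = 0 ∧ F i (q i) = 0 ∧ F j (q i) = 0 := by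
  obtain rfl : u = utility v τ := funext fun i => funext (hu i)
  have hτ : IsTieBreakingRule τ := ⟨hτ_meas, hτ_nonneg, hτ_sum, hτ_max⟩
  have hN : IsMixedNash v τ B := ⟨hInt, hNash⟩
  obtain rfl : q = fun k => lowestBid (B k) := funext fun k => by simp only [hq, hG, lowestBid]
  have hqij : lowestBid (B i) = lowestBid (B j) :=
    le_antisymm (hN.lowestBid_le hB_supp hτ hij huj) (hN.lowestBid_le hB_supp hτ hij.symm hui)
  have hi := hN.measure_Iic_lowestBid_eq_zero hB_supp hτ hij hui huj hqij
  have hj := hqij ▸ hN.measure_Iic_lowestBid_eq_zero hB_supp hτ hij.symm huj hui hqij.symm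
  have hF_zero : ∀ k l, l ≠ k → B l (Set.Iic (lowestBid (B i))) = 0 →
      F k (lowestBid (B i)) = 0 := fun k l hlk hl => by
    rw [hF]
    exact ENNReal.toReal_eq_zero_iff _ |>.2 (.inl (measure_pi_forall_ne_mem_eq_zero B hlk hl))
  exact ⟨hqij, by simp [hG, hi], by simp [hG, hj], hF_zero i j hij.symm hj, hF_zero j i hij hi⟩

/-- If in a mixed Nash equilibrium `B` of the single-item first-price auction
two distinct players `i` and `j` have strictly positive expected utility, then the infima
`q_i = inf{x : G_i(x) > 0}` and `q_j = inf{x : G_j(x) > 0}` of their bid supports coincide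
(`q_i = q_j =: q`), and moreover `G_i(q) = G_j(q) = 0` and consequently `F_i(q) = F_j(q) = 0`. -/
theorem stmt_5
    (n : ℕ)
    (v : Fin n → ℝ) (hv : ∀ i, 0 ≤ v i)
    -- the tie-breaking rule: a measurable probability vector supported on the highest bidders
    (τ : (Fin n → ℝ) → Fin n → ℝ)
    (hτ_meas : ∀ i, Measurable fun b => τ b i)
    (hτ_nonneg : ∀ b i, 0 ≤ τ b i)
    (hτ_sum : ∀ b, ∑ i, τ b i = 1)
    (hτ_max : ∀ b i, (∃ k, b i < b k) → τ b i = 0)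
    -- utilities
    (u : Fin n → (Fin n → ℝ) → ℝ)
    (hu : ∀ i b, u i b = τ b i * (v i - b i))
    -- the mixed strategy profile: independent bids, supported on `[0, ∞)`
    (B : Fin n → Measure ℝ)
    [∀ i, IsProbabilityMeasure (B i)]
    (hB_supp : ∀ i, B i (Set.Iio 0) = 0)
    -- all relevant expectations exist
    (hInt : ∀ i, Integrable (u i) (Measure.pi B))
    (hIntDev : ∀ i (a : ℝ),
      Integrable (fun b => u i (Function.update b i a)) (Measure.pi B))
    -- the Nash equilibrium condition
    (hNash : ∀ i (a : ℝ), 0 ≤ a →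
      (∫ b, u i b ∂(Measure.pi B)) ≥ ∫ b, u i (Function.update b i a) ∂(Measure.pi B))
    -- CDF of each player's bid, infimum of its support, CDF of the highest competing bid
    (G : Fin n → ℝ → ℝ) (hG : ∀ k x, G k x = (B k (Set.Iic x)).toReal)
    (q : Fin n → ℝ) (hq : ∀ k, q k = sInf {x : ℝ | 0 < G k x})
    (F : Fin n → ℝ → ℝ)
    (hF : ∀ i x, F i x = ((Measure.pi B) {b | ∀ k, k ≠ i → b k ≤ x}).toReal)
    -- two distinct players with strictly positive expected utility
    (i j : Fin n) (hij : i ≠ j)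
    (hui : 0 < ∫ b, u i b ∂(Measure.pi B))
    (huj : 0 < ∫ b, u j b ∂(Measure.pi B)) :
    q i = q j ∧ G i (q i) = 0 ∧ G j (q i) = 0 ∧ F i (q i) = 0 ∧ F j (q i) = 0 :=
  stmt_5_general n v τ hτ_meas hτ_nonneg hτ_sum hτ_max u hu B hB_supp hInt hNash G hG q hq F hF i j
    hij hui huj
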